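/- The optimal values of the discrete-time dual SOS approximations converge monotonically from above to the optimal value of the discrete-time dual LP: d_{k+1}* ≤ d_k*, d_k* ≥ d* for all k, and lim_{k→∞} d_k* = d*. -/

import Mathlib

open MeasureTheory

/-- A polynomial is a sum of squares. -/
def IsSOS {σ : Type*} (p : MvPolynomial σ ℝ) : Prop :=
  ∃ (k : ℕ) (q : Fin k → MvPolynomial σ ℝ), p = ∑ i, (q i) ^ 2

/-- The basic closed semialgebraic set `{x : ∀ i, gᵢ(x) ≥ 0}`. -/
def semiSet {n nX : ℕ} (g : Fin nX → MvPolynomial (Fin n) ℝ) : Set (Fin n → ℝ) :=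
  {x | ∀ i, 0 ≤ MvPolynomial.eval x (g i)}

/-- Evaluation of the polynomial map `f` with components `F i ∈ ℝ[x, u]`. -/
noncomputable def polyMapEval {n m : ℕ} (F : Fin n → MvPolynomial (Fin n ⊕ Fin m) ℝ)
    (x : Fin n → ℝ) (u : Fin m → ℝ) : Fin n → ℝ :=
  fun i => MvPolynomial.eval (Sum.elim x u) (F i)

/-- Feasibility of a pair of continuous functions `(v, w)` for the discrete-time dual LP. -/
def DualFeasD {n m nX nU : ℕ} (g : Fin nX → MvPolynomial (Fin n) ℝ)
    (h : Fin nU → MvPolynomial (Fin m) ℝ)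
    (F : Fin n → MvPolynomial (Fin n ⊕ Fin m) ℝ)
    (α : ℝ) (v w : (Fin n → ℝ) → ℝ) : Prop :=
  Continuous v ∧ Continuous w ∧
  (∀ x ∈ semiSet g, ∀ u ∈ semiSet h, α * v (polyMapEval F x u) ≤ v x) ∧
  (∀ x ∈ semiSet g, v x + 1 ≤ w x) ∧
  (∀ x ∈ semiSet g, 0 ≤ w x)

/-- The optimal value `d*` of the discrete-time dual LP. -/
noncomputable def dualValD {n m nX nU : ℕ} (g : Fin nX → MvPolynomial (Fin n) ℝ)
    (h : Fin nU → MvPolynomial (Fin m) ℝ)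
    (F : Fin n → MvPolynomial (Fin n ⊕ Fin m) ℝ) (α : ℝ) : ℝ :=
  sInf {r : ℝ | ∃ v w, DualFeasD g h F α v w ∧ r = ∫ x in semiSet g, w x ∂volume}

/-- `k`-feasibility of a pair of polynomials `(v, w)` for the `k`-th discrete-time
dual SOS (Putinar) approximation. -/
def KFeasD {n m nX nU : ℕ} (g : Fin nX → MvPolynomial (Fin n) ℝ)
    (h : Fin nU → MvPolynomial (Fin m) ℝ)
    (F : Fin n → MvPolynomial (Fin n ⊕ Fin m) ℝ)
    (α : ℝ) (k : ℕ) (v w : MvPolynomial (Fin n) ℝ) : Prop :=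
  v.totalDegree ≤ 2 * k ∧ w.totalDegree ≤ 2 * k ∧
  ∃ (q0 : MvPolynomial (Fin n ⊕ Fin m) ℝ) (q : Fin nX → MvPolynomial (Fin n ⊕ Fin m) ℝ)
    (r : Fin nU → MvPolynomial (Fin n ⊕ Fin m) ℝ)
    (p0 : MvPolynomial (Fin n) ℝ) (p : Fin nX → MvPolynomial (Fin n) ℝ)
    (s0 : MvPolynomial (Fin n) ℝ) (s : Fin nX → MvPolynomial (Fin n) ℝ),
    IsSOS q0 ∧ (∀ i, IsSOS (q i)) ∧ (∀ j, IsSOS (r j)) ∧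
    IsSOS p0 ∧ (∀ i, IsSOS (p i)) ∧ IsSOS s0 ∧ (∀ i, IsSOS (s i)) ∧
    q0.totalDegree ≤ 2 * k * max 1 (Finset.univ.sup fun i => (F i).totalDegree) ∧
    (∀ i, (q i * MvPolynomial.rename Sum.inl (g i)).totalDegree
      ≤ 2 * k * max 1 (Finset.univ.sup fun i => (F i).totalDegree)) ∧
    (∀ j, (r j * MvPolynomial.rename Sum.inr (h j)).totalDegree
      ≤ 2 * k * max 1 (Finset.univ.sup fun i => (F i).totalDegree)) ∧
    p0.totalDegree ≤ 2 * k ∧ (∀ i, (p i * g i).totalDegree ≤ 2 * k) ∧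
    s0.totalDegree ≤ 2 * k ∧ (∀ i, (s i * g i).totalDegree ≤ 2 * k) ∧
    MvPolynomial.rename Sum.inl v - MvPolynomial.C α * MvPolynomial.aeval F v
      = q0 + ∑ i, q i * MvPolynomial.rename Sum.inl (g i)
          + ∑ j, r j * MvPolynomial.rename Sum.inr (h j) ∧
    w - v - 1 = p0 + ∑ i, p i * g i ∧
    w = s0 + ∑ i, s i * g i

/-- The optimal value `d_k*` of the `k`-th discrete-time dual SOS approximation. -/
noncomputable def sosValD {n m nX nU : ℕ} (g : Fin nX → MvPolynomial (Fin n) ℝ)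
    (h : Fin nU → MvPolynomial (Fin m) ℝ)
    (F : Fin n → MvPolynomial (Fin n ⊕ Fin m) ℝ) (α : ℝ) (k : ℕ) : ℝ :=
  sInf {r : ℝ | ∃ v w, KFeasD g h F α k v w ∧
    r = ∫ x in semiSet g, MvPolynomial.eval x w ∂volume}

/-!
Monotonicity holds because a certificate of order `k` is one of order `k + 1`, and `d* ≤ d_k*`
because a certificate makes its pair of polynomials feasible for the LP. For the convergence, a
feasible pair `(v, w)` is shifted to `(v + c, w + 2c)` and approximated uniformly on
`X ∪ f(X × U)` by polynomials `(V, W)` (Stone–Weierstrass). The pair `(V, W)` satisfies the LP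
constraints strictly, so Putinar's Positivstellensatz, which applies because the ball constraints
make the quadratic modules Archimedean, provides certificates of some finite order, while
`∫ W ≤ ∫ w + ε`.

Putinar's theorem is proved through Jacobi's representation theorem: let `M` be an Archimedean
quadratic module and `p` positive at every character nonnegative on `M`. If `M - Σ² p` is proper,
a maximal proper extension cuts out a character `φ ≥ 0` on `M` with `φ p ≤ 0`, which is
impossible. Otherwise `σ p = 1 + t` with `σ` a sum of squares and `t ∈ M`, and evaluating a
truncation `G` of the series of `(1 - z)^(-1/2)` at `1 - σ` (after rescaling) writes
`p = G² σ p + (1 - σ G²) p` as an element of `M`.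
-/

open scoped algebraMap

theorem IsSumSq.map {R S F : Type*} [Semiring R] [Semiring S] [FunLike F R S]
    [RingHomClass F R S] (f : F) {s : R} (hs : IsSumSq s) : IsSumSq (f s) := by
  induction hs with
  | zero => simp
  | sq_add a _ ih => simpa using IsSumSq.sq_add (f a) ih

theorem isSOS_iff_isSumSq {σ : Type*} {p : MvPolynomial σ ℝ} : IsSOS p ↔ IsSumSq p := by
  refine ⟨fun ⟨k, q, hq⟩ => hq ▸ IsSumSq.sum_sq _ _, fun hp => ?_⟩
  induction hp with
  | zero => exact ⟨0, ![], by simp⟩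
  | sq_add a _ ih =>
    obtain ⟨k, q, rfl⟩ := ih
    exact ⟨k + 1, Fin.cons a q, by simp [Fin.sum_univ_succ, sq]⟩

structure IsQuadraticModule {A : Type*} [CommRing A] (M : Set A) : Prop where
  one_mem : 1 ∈ M
  add_mem {a b : A} : a ∈ M → b ∈ M → a + b ∈ M
  mul_self_mul_mem (c : A) {a : A} : a ∈ M → c * c * a ∈ M

namespace IsQuadraticModule

variable {A : Type*} [CommRing A] {M : Set A}

theorem zero_mem (hM : IsQuadraticModule M) : 0 ∈ M := by
  simpa using hM.mul_self_mul_mem 0 hM.one_mem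

theorem sum_mem (hM : IsQuadraticModule M) {ι : Type*} {s : Finset ι} {f : ι → A}
    (h : ∀ i ∈ s, f i ∈ M) : ∑ i ∈ s, f i ∈ M := by
  classical
  induction s using Finset.induction_on with
  | empty => simpa using hM.zero_mem
  | insert i s hi ih =>
    rw [Finset.sum_insert hi]
    exact hM.add_mem (h i (s.mem_insert_self i)) (ih fun j hj => h j (Finset.mem_insert_of_mem hj))

theorem isSumSq_mul_mem (hM : IsQuadraticModule M) {s a : A} (hs : IsSumSq s) (ha : a ∈ M) :
    s * a ∈ M := by
  induction hs with
  | zero => simpa using hM.zero_mem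
  | sq_add c _ ih => simpa [add_mul] using hM.add_mem (hM.mul_self_mul_mem c ha) ih

theorem isSumSq_mem (hM : IsQuadraticModule M) {s : A} (hs : IsSumSq s) : s ∈ M := by
  simpa using hM.isSumSq_mul_mem hs hM.one_mem

theorem mul_self_mem (hM : IsQuadraticModule M) (a : A) : a * a ∈ M := by
  simpa using hM.mul_self_mul_mem a hM.one_mem

theorem sq_mem (hM : IsQuadraticModule M) (a : A) : a ^ 2 ∈ M := by
  simpa [sq] using hM.mul_self_mem a

theorem pow_mul_mem (hM : IsQuadraticModule M) {v w : A} (hvw : v * w ∈ M) (hw : w ∈ M)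
    (l : ℕ) : v ^ l * w ∈ M := by
  rcases Nat.even_or_odd' l with ⟨k, rfl | rfl⟩
  · convert hM.mul_self_mul_mem (v ^ k) hw using 1
    ring
  · convert hM.mul_self_mul_mem (v ^ k) hvw using 1
    ring

theorem pow_mem (hM : IsQuadraticModule M) {v : A} (hv : v ∈ M) (l : ℕ) : v ^ l ∈ M := by
  simpa using hM.pow_mul_mem (w := 1) (by simpa using hv) hM.one_mem l

end IsQuadraticModule

theorem algebraMap_inv_mul_cancel {A : Type*} [Ring A] [Algebra ℝ A] {r : ℝ} (hr : r ≠ 0) :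
    ((r⁻¹ : ℝ) : A) * (r : A) = 1 := by
  rw [← algebraMap.coe_mul, inv_mul_cancel₀ hr, algebraMap.coe_one]

theorem algebraMap_ofNat_two {A : Type*} [Ring A] [Algebra ℝ A] : ((2 : ℝ) : A) = 2 :=
  map_ofNat (algebraMap ℝ A) 2

namespace IsQuadraticModule

variable {A : Type*} [CommRing A] [Algebra ℝ A] {M : Set A}

theorem algebraMap_mul_mem (hM : IsQuadraticModule M) {r : ℝ} (hr : 0 ≤ r) {a : A}
    (ha : a ∈ M) : (r : A) * a ∈ M := by
  have hsq : (r : A) = (√r : A) * (√r : A) := by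
    rw [← algebraMap.coe_mul, Real.mul_self_sqrt hr]
  simpa [hsq] using hM.mul_self_mul_mem (√r : A) ha

theorem algebraMap_mem (hM : IsQuadraticModule M) {r : ℝ} (hr : 0 ≤ r) : (r : A) ∈ M := by
  simpa using hM.algebraMap_mul_mem hr hM.one_mem

theorem sub_mem_of_le (hM : IsQuadraticModule M) {r r' : ℝ} {a : A} (h : (r : A) - a ∈ M)
    (hrr' : r ≤ r') : (r' : A) - a ∈ M := by
  have := hM.add_mem (hM.algebraMap_mem (sub_nonneg.2 hrr')) h
  rwa [algebraMap.coe_sub, sub_add_sub_cancel] at this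

theorem mul_mem_of_mem_of_neg_mem (hM : IsQuadraticModule M) {x : A} (hx : x ∈ M)
    (hx' : -x ∈ M) (y : A) : y * x ∈ M := by
  -- `((y + 1) / 2)² x + ((y - 1) / 2)² (-x) = y x`
  have h2 : ((2⁻¹ : ℝ) : A) * 2 = 1 := by
    simpa [algebraMap_ofNat_two] using algebraMap_inv_mul_cancel (A := A) two_ne_zero
  have := hM.add_mem (hM.mul_self_mul_mem (((2⁻¹ : ℝ) : A) * (y + 1)) hx)
    (hM.mul_self_mul_mem (((2⁻¹ : ℝ) : A) * (y - 1)) hx')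
  convert this using 1
  linear_combination (-(y * x) * (((2⁻¹ : ℝ) : A) * 2 + 1)) * h2

theorem sq_sub_sq_mem (hM : IsQuadraticModule M) {r : ℝ} (hr : 0 < r) {a : A}
    (h₁ : (r : A) - a ∈ M) (h₂ : (r : A) + a ∈ M) : (r : A) ^ 2 - a ^ 2 ∈ M := by
  -- `(r + a)² (r - a) + (r - a)² (r + a) = 2r (r² - a²)`
  have := hM.algebraMap_mul_mem (inv_nonneg.2 (mul_pos two_pos hr).le)
    (hM.add_mem (hM.mul_self_mul_mem ((r : A) + a) h₁) (hM.mul_self_mul_mem ((r : A) - a) h₂))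
  convert this using 1
  have hinv := algebraMap_inv_mul_cancel (A := A) (mul_pos two_pos hr).ne'
  push_cast [algebraMap_ofNat_two] at hinv
  linear_combination (-((r : A) ^ 2 - a ^ 2)) * hinv

theorem add_mem_of_sq_sub_sq_mem (hM : IsQuadraticModule M) {r : ℝ} (hr : 0 < r) {a : A}
    (h : (r : A) ^ 2 - a ^ 2 ∈ M) : (r : A) + a ∈ M := by
  -- `(r + a)² + (r² - a²) = 2r (r + a)`
  have := hM.algebraMap_mul_mem (inv_nonneg.2 (mul_pos two_pos hr).le)
    (hM.add_mem (hM.sq_mem ((r : A) + a)) h)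
  convert this using 1
  have hinv := algebraMap_inv_mul_cancel (A := A) (mul_pos two_pos hr).ne'
  push_cast [algebraMap_ofNat_two] at hinv
  linear_combination (-((r : A) + a)) * hinv

theorem mul_add_mul_mem (hM : IsQuadraticModule M) {r r' : ℝ} (hr : 0 < r) (hr' : 0 < r')
    {a b : A} (ha₁ : (r : A) - a ∈ M) (ha₂ : (r : A) + a ∈ M) (hb₁ : (r' : A) - b ∈ M)
    (hb₂ : (r' : A) + b ∈ M) : ((r * r' : ℝ) : A) + a * b ∈ M := by
  -- `r² (r'² - b²) + b² (r² - a²) = (r r')² - (a b)²`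
  refine hM.add_mem_of_sq_sub_sq_mem (mul_pos hr hr') ?_
  have := hM.add_mem (hM.algebraMap_mul_mem (sq_nonneg r) (hM.sq_sub_sq_mem hr' hb₁ hb₂))
    (hM.mul_self_mul_mem b (hM.sq_sub_sq_mem hr ha₁ ha₂))
  convert this using 1
  push_cast
  ring

end IsQuadraticModule

section QuadraticModuleGeneration

variable {A : Type*} [CommRing A]

def qmodule {ι : Type*} [Fintype ι] (G : ι → A) : Set A :=
  {p | ∃ (s₀ : A) (s : ι → A), IsSumSq s₀ ∧ (∀ i, IsSumSq (s i)) ∧ p = s₀ + ∑ i, s i * G i}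

theorem isQuadraticModule_qmodule {ι : Type*} [Fintype ι] (G : ι → A) :
    IsQuadraticModule (qmodule G) where
  one_mem := ⟨1, 0, .one, fun _ => .zero, by simp⟩
  add_mem := by
    rintro _ _ ⟨s₀, s, hs₀, hs, rfl⟩ ⟨t₀, t, ht₀, ht, rfl⟩
    refine ⟨s₀ + t₀, s + t, hs₀.add ht₀, fun i => (hs i).add (ht i), ?_⟩
    simp only [Pi.add_apply, add_mul, Finset.sum_add_distrib]
    ring
  mul_self_mul_mem c := by
    rintro _ ⟨s₀, s, hs₀, hs, rfl⟩
    refine ⟨c * c * s₀, fun i => c * c * s i, (IsSumSq.mul_self c).mul hs₀,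
      fun i => (IsSumSq.mul_self c).mul (hs i), ?_⟩
    simp only [mul_add, Finset.mul_sum, mul_assoc]

theorem generator_mem_qmodule {ι : Type*} [Fintype ι] (G : ι → A) (i : ι) : G i ∈ qmodule G := by
  classical
  refine ⟨0, Pi.single i 1, .zero, fun j => ?_, by simp [Pi.single_apply]⟩
  rcases eq_or_ne j i with rfl | hji
  · simp
  · simp [hji]

def qmAdjoin (M : Set A) (a : A) : Set A :=
  {x | ∃ t ∈ M, ∃ s, IsSumSq s ∧ x = t + s * a}

theorem subset_qmAdjoin (M : Set A) (a : A) : M ⊆ qmAdjoin M a :=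
  fun t ht => ⟨t, ht, 0, .zero, by simp⟩

theorem isQuadraticModule_qmAdjoin {M : Set A} (hM : IsQuadraticModule M) (a : A) :
    IsQuadraticModule (qmAdjoin M a) where
  one_mem := subset_qmAdjoin M a hM.one_mem
  add_mem := by
    rintro _ _ ⟨t₁, ht₁, s₁, hs₁, rfl⟩ ⟨t₂, ht₂, s₂, hs₂, rfl⟩
    exact ⟨t₁ + t₂, hM.add_mem ht₁ ht₂, s₁ + s₂, hs₁.add hs₂, by ring⟩
  mul_self_mul_mem c := by
    rintro _ ⟨t, ht, s, hs, rfl⟩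
    exact ⟨c * c * t, hM.mul_self_mul_mem c ht, c * c * s, (IsSumSq.mul_self c).mul hs, by ring⟩

theorem IsQuadraticModule.mem_qmAdjoin_self {M : Set A} (hM : IsQuadraticModule M) (a : A) :
    a ∈ qmAdjoin M a :=
  ⟨0, hM.zero_mem, 1, .one, by simp⟩

end QuadraticModuleGeneration

section Archimedean

variable {A : Type*} [CommRing A] [Algebra ℝ A]

def IsArchimedeanQM (M : Set A) : Prop :=
  ∀ a : A, ∃ r : ℝ, (r : A) - a ∈ M

theorem IsArchimedeanQM.mono {M N : Set A} (hM : IsArchimedeanQM M) (hMN : M ⊆ N) :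
    IsArchimedeanQM N :=
  fun a => (hM a).imp fun _ h => hMN h

namespace IsQuadraticModule

variable {M : Set A}

theorem exists_pos_of_bounded (hM : IsQuadraticModule M) {a : A} {r : ℝ}
    (h₁ : (r : A) - a ∈ M) (h₂ : (r : A) + a ∈ M) :
    ∃ r' : ℝ, 0 < r' ∧ (r' : A) - a ∈ M ∧ (r' : A) + a ∈ M := by
  refine ⟨max r 1, by positivity, hM.sub_mem_of_le h₁ (le_max_left _ _), ?_⟩
  simpa using hM.sub_mem_of_le (a := -a) (by simpa using h₂) (le_max_left r 1)

def boundedSubalgebra (hM : IsQuadraticModule M) : Subalgebra ℝ A where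
  carrier := {a | ∃ r : ℝ, (r : A) - a ∈ M ∧ (r : A) + a ∈ M}
  algebraMap_mem' c := ⟨|c|, by
    simpa only [algebraMap.coe_sub] using hM.algebraMap_mem (A := A) (sub_nonneg.2 (le_abs_self c)),
    by simpa only [algebraMap.coe_add, add_comm] using
      hM.algebraMap_mem (A := A) (neg_le_iff_add_nonneg.1 (neg_abs_le c))⟩
  add_mem' := by
    rintro a b ⟨r, ha₁, ha₂⟩ ⟨r', hb₁, hb₂⟩
    refine ⟨r + r', ?_, ?_⟩
    · simpa [sub_add_sub_comm] using hM.add_mem ha₁ hb₁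
    · simpa [add_add_add_comm] using hM.add_mem ha₂ hb₂
  mul_mem' := by
    rintro a b ⟨r, ha₁, ha₂⟩ ⟨r', hb₁, hb₂⟩
    obtain ⟨r, hr, ha₁, ha₂⟩ := hM.exists_pos_of_bounded ha₁ ha₂
    obtain ⟨r', hr', hb₁, hb₂⟩ := hM.exists_pos_of_bounded hb₁ hb₂
    refine ⟨r * r', ?_, hM.mul_add_mul_mem hr hr' ha₁ ha₂ hb₁ hb₂⟩
    simpa [sub_eq_add_neg] using
      hM.mul_add_mul_mem hr hr' ha₁ ha₂ (b := -b) (by rwa [sub_neg_eq_add])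
        (by rwa [← sub_eq_add_neg])

theorem mem_boundedSubalgebra_of_sub_mul_self_mem (hM : IsQuadraticModule M) {r : ℝ} {a : A}
    (h : (r : A) - a * a ∈ M) : a ∈ hM.boundedSubalgebra := by
  -- `(a ∓ 1)² + (r - a²) = (r + 1) ± 2a`
  have h2 : ((2⁻¹ : ℝ) : A) * 2 = 1 := by
    simpa [algebraMap_ofNat_two] using algebraMap_inv_mul_cancel (A := A) two_ne_zero
  refine ⟨2⁻¹ * (r + 1), ?_, ?_⟩
  · convert hM.algebraMap_mul_mem (inv_nonneg.2 zero_le_two)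
      (hM.add_mem (hM.mul_self_mem (a - 1)) h) using 1
    push_cast
    linear_combination a * h2
  · convert hM.algebraMap_mul_mem (inv_nonneg.2 zero_le_two)
      (hM.add_mem (hM.mul_self_mem (a + 1)) h) using 1
    push_cast
    linear_combination (-a) * h2

theorem isArchimedeanQM_of_boundedSubalgebra_eq_top (hM : IsQuadraticModule M)
    (htop : hM.boundedSubalgebra = ⊤) : IsArchimedeanQM M := fun a => by
  obtain ⟨r, hr, -⟩ : a ∈ hM.boundedSubalgebra := htop ▸ Algebra.mem_top
  exact ⟨r, hr⟩

end IsQuadraticModule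

open MvPolynomial in
theorem IsQuadraticModule.isArchimedeanQM_of_ball_mem {σ : Type*} [Fintype σ]
    {M : Set (MvPolynomial σ ℝ)} (hM : IsQuadraticModule M) {R : ℝ}
    (hball : C R - ∑ i, X i ^ 2 ∈ M) : IsArchimedeanQM M := by
  classical
  refine hM.isArchimedeanQM_of_boundedSubalgebra_eq_top (eq_top_iff.2 ?_)
  rw [← adjoin_range_X, Algebra.adjoin_le_iff]
  rintro _ ⟨i, rfl⟩
  refine hM.mem_boundedSubalgebra_of_sub_mul_self_mem (r := R) ?_
  have hsplit := Finset.add_sum_erase Finset.univ (fun j => (X j : MvPolynomial σ ℝ) ^ 2)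
    (Finset.mem_univ i)
  convert hM.add_mem hball (hM.sum_mem (s := Finset.univ.erase i) fun j _ => hM.sq_mem (X j))
    using 1
  rw [← hsplit]
  change C R - _ = _
  ring

end Archimedean

section MaximalProper

variable {A : Type*} [CommRing A]

def IsQuadraticModule.support [Algebra ℝ A] {M : Set A} (hM : IsQuadraticModule M) : Ideal A where
  carrier := {x | x ∈ M ∧ -x ∈ M}
  zero_mem' := ⟨hM.zero_mem, by simpa using hM.zero_mem⟩
  add_mem' := fun ⟨ha, ha'⟩ ⟨hb, hb'⟩ =>
    ⟨hM.add_mem ha hb, by simpa [add_comm] using hM.add_mem ha' hb'⟩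
  smul_mem' c x := fun ⟨hx, hx'⟩ =>
    ⟨hM.mul_mem_of_mem_of_neg_mem hx hx' c, by
      simpa using hM.mul_mem_of_mem_of_neg_mem hx' (by simpa using hx) c⟩

def IsProperQM (M : Set A) : Prop :=
  IsQuadraticModule M ∧ (-1 : A) ∉ M

namespace IsProperQM

theorem exists_maximal {M : Set A} (hM : IsProperQM M) : ∃ P, M ⊆ P ∧ Maximal IsProperQM P := by
  refine zorn_subset_nonempty {N | IsProperQM N} ?_ M hM
  rintro c hc hchain ⟨N, hN⟩
  have hmem : ∀ {a}, a ∈ ⋃₀ c ↔ ∃ N ∈ c, a ∈ N := Set.mem_sUnion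
  refine ⟨⋃₀ c, ⟨⟨?_, ?_, ?_⟩, ?_⟩, fun _ => Set.subset_sUnion_of_mem⟩
  · exact hmem.2 ⟨N, hN, (hc hN).1.one_mem⟩
  · rintro a b ⟨N₁, hN₁, ha⟩ ⟨N₂, hN₂, hb⟩
    rcases hchain.total hN₁ hN₂ with h | h
    · exact hmem.2 ⟨N₂, hN₂, (hc hN₂).1.add_mem (h ha) hb⟩
    · exact hmem.2 ⟨N₁, hN₁, (hc hN₁).1.add_mem ha (h hb)⟩
  · rintro d a ⟨N₁, hN₁, ha⟩
    exact hmem.2 ⟨N₁, hN₁, (hc hN₁).1.mul_self_mul_mem d ha⟩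
  · rintro ⟨N₁, hN₁, h⟩
    exact (hc hN₁).2 h

variable {P : Set A}

theorem neg_one_mem_qmAdjoin (hP : Maximal IsProperQM P) {a : A} (ha : a ∉ P) :
    -1 ∈ qmAdjoin P a := by
  by_contra h
  have := hP.eq_of_subset ⟨isQuadraticModule_qmAdjoin hP.prop.1 a, h⟩ (subset_qmAdjoin P a)
  exact ha (this ▸ hP.prop.1.mem_qmAdjoin_self a)

variable [Algebra ℝ A]

theorem mem_or_neg_mem (hP : Maximal IsProperQM P) (a : A) : a ∈ P ∨ -a ∈ P := by
  by_contra! ⟨ha, hna⟩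
  obtain ⟨t₁, ht₁, s₁, hs₁, he₁⟩ := neg_one_mem_qmAdjoin hP ha
  obtain ⟨t₂, ht₂, s₂, hs₂, he₂⟩ := neg_one_mem_qmAdjoin hP hna
  have hQ := hP.prop.1
  -- `s₁ ∈ P` and `-s₁ = s₂ t₁ + s₁ t₂ + s₂ ∈ P`, so `s₁ a ∈ P` and `-1 = t₁ + s₁ a ∈ P`.
  have hns₁ : -s₁ ∈ P := by
    convert hQ.add_mem (hQ.add_mem (hQ.isSumSq_mul_mem hs₂ ht₁) (hQ.isSumSq_mul_mem hs₁ ht₂))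
      (hQ.isSumSq_mem hs₂) using 1
    linear_combination s₂ * he₁ + s₁ * he₂
  have := hQ.add_mem ht₁ (hQ.mul_mem_of_mem_of_neg_mem (hQ.isSumSq_mem hs₁) hns₁ a)
  exact hP.prop.2 (by rwa [he₁, mul_comm])

theorem nonneg_of_algebraMap_mem {M : Set A} (hM : IsProperQM M) {r : ℝ} (hr : (r : A) ∈ M) :
    0 ≤ r := by
  by_contra! hr0
  apply hM.2
  convert hM.1.algebraMap_mul_mem (inv_nonneg.2 (neg_nonneg.2 hr0.le)) hr using 1
  rw [← algebraMap.coe_mul, inv_neg, neg_mul, inv_mul_cancel₀ hr0.ne, algebraMap.coe_neg,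
    algebraMap.coe_one]

theorem le_of_sub_mem_of_sub_mem {M : Set A} (hM : IsProperQM M) {a : A} {r r' : ℝ}
    (h₁ : (r : A) - a ∈ M) (h₂ : a - (r' : A) ∈ M) : r' ≤ r := by
  have := hM.nonneg_of_algebraMap_mem (r := r - r') (by simpa using hM.1.add_mem h₁ h₂)
  linarith

theorem mem_of_forall_pos_add_mem (hP : Maximal IsProperQM P) (harch : IsArchimedeanQM P)
    {b : A} (hb : ∀ ε : ℝ, 0 < ε → (ε : A) + b ∈ P) : b ∈ P := by
  by_contra hbP
  obtain ⟨t, ht, s, hs, he⟩ := neg_one_mem_qmAdjoin hP hbP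
  have hQ := hP.prop.1
  obtain ⟨k, hk⟩ := harch s
  have hk' := hQ.sub_mem_of_le hk (le_max_left k 1)
  set K := max k 1
  have hK : 0 < K := by positivity
  -- with `ε = 1 / (2K)`: `s (ε + b) + t + ε (K - s) = εK - 1 = -1/2`
  have := hQ.add_mem (hQ.add_mem (hQ.isSumSq_mul_mem hs (hb (2 * K)⁻¹ (by positivity))) ht)
    (hQ.algebraMap_mul_mem (inv_nonneg.2 (by positivity : (0 : ℝ) ≤ 2 * K)) hk')
  have hval := hP.prop.nonneg_of_algebraMap_mem (r := (2 * K)⁻¹ * K - 1) (by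
    convert this using 1
    push_cast
    linear_combination he)
  have hhalf : (2 * K)⁻¹ * K = 1 / 2 := by field_simp
  linarith

theorem exists_sub_mem_support (hP : Maximal IsProperQM P) (harch : IsArchimedeanQM P)
    (a : A) : ∃ r : ℝ, a - (r : A) ∈ hP.prop.1.support := by
  set S := {r : ℝ | (r : A) - a ∈ P}
  have hne : S.Nonempty := harch a
  have hbdd : BddBelow S := by
    obtain ⟨r₀, hr₀⟩ := harch (-a)
    exact ⟨-r₀, fun r hr => hP.prop.le_of_sub_mem_of_sub_mem hr (by simpa [add_comm] using hr₀)⟩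
  refine ⟨sInf S, mem_of_forall_pos_add_mem hP harch fun ε hε => ?_,
    (neg_sub _ a).symm ▸ mem_of_forall_pos_add_mem hP harch fun ε hε => ?_⟩
  · have hlt : ¬ sInf S - ε ∈ S := fun h => by linarith [csInf_le hbdd h]
    convert (mem_or_neg_mem hP _).resolve_left hlt using 1
    push_cast
    ring
  · obtain ⟨r, hr, hlt⟩ := exists_lt_of_csInf_lt hne (lt_add_of_pos_right (sInf S) hε)
    convert hP.prop.1.sub_mem_of_le hr hlt.le using 1
    push_cast
    ring

theorem eq_of_sub_mem_support (hP : IsProperQM P) {a : A} {r r' : ℝ}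
    (h : a - (r : A) ∈ hP.1.support) (h' : a - (r' : A) ∈ hP.1.support) : r = r' := by
  have hdiff := hP.1.support.sub_mem h' h
  rw [sub_sub_sub_cancel_left, ← algebraMap.coe_sub] at hdiff
  have h₁ := hP.nonneg_of_algebraMap_mem hdiff.1
  have h₂ := hP.nonneg_of_algebraMap_mem (r := r' - r) (by simpa using hdiff.2)
  linarith

noncomputable def value (hP : Maximal IsProperQM P) (harch : IsArchimedeanQM P) (a : A) : ℝ :=
  (exists_sub_mem_support hP harch a).choose

theorem value_eq (hP : Maximal IsProperQM P) (harch : IsArchimedeanQM P) {a : A} {r : ℝ}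
    (h : a - (r : A) ∈ hP.prop.1.support) : value hP harch a = r :=
  hP.prop.eq_of_sub_mem_support (exists_sub_mem_support hP harch a).choose_spec h

noncomputable def character (hP : Maximal IsProperQM P) (harch : IsArchimedeanQM P) :
    A →ₐ[ℝ] ℝ where
  toFun := value hP harch
  map_one' := value_eq hP harch (by simp)
  map_mul' a b := value_eq hP harch <| by
    have ha := (exists_sub_mem_support hP harch a).choose_spec
    have hb := (exists_sub_mem_support hP harch b).choose_spec
    convert hP.prop.1.support.add_mem (hP.prop.1.support.mul_mem_left b ha)
      (hP.prop.1.support.mul_mem_left (value hP harch a : A) hb) using 1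
    push_cast
    unfold value
    ring
  map_zero' := value_eq hP harch (by simp)
  map_add' a b := value_eq hP harch <| by
    have ha := (exists_sub_mem_support hP harch a).choose_spec
    have hb := (exists_sub_mem_support hP harch b).choose_spec
    convert hP.prop.1.support.add_mem ha hb using 1
    push_cast
    unfold value
    ring
  commutes' r := value_eq hP harch (by simp)

theorem character_nonneg (hP : Maximal IsProperQM P) (harch : IsArchimedeanQM P) {a : A}
    (ha : a ∈ P) : 0 ≤ character hP harch a := by
  have h := (exists_sub_mem_support hP harch a).choose_spec.2
  rw [neg_sub] at h
  exact hP.prop.le_of_sub_mem_of_sub_mem (r' := 0) h (by simpa using ha)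

theorem exists_algHom_nonneg {M : Set A} (hM : IsProperQM M) (harch : IsArchimedeanQM M) :
    ∃ φ : A →ₐ[ℝ] ℝ, ∀ a ∈ M, 0 ≤ φ a := by
  obtain ⟨P, hMP, hP⟩ := hM.exists_maximal
  have harchP := harch.mono hMP
  exact ⟨character hP harchP, fun a ha => character_nonneg hP harchP (hMP ha)⟩

end IsProperQM

end MaximalProper

section InvSqrtPoly

section InvSqrtSeries

open PowerSeries

/-- The Taylor coefficients of `(1 - z)^(-1/2)`. -/
noncomputable def invSqrtCoeff : ℕ → ℝ
  | 0 => 1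
  | j + 1 => invSqrtCoeff j * (2 * j + 1) / (2 * j + 2)
theorem invSqrtCoeff_pos (j : ℕ) : 0 < invSqrtCoeff j := by
  induction j with
  | zero => norm_num [invSqrtCoeff]
  | succ j ih => rw [invSqrtCoeff]; positivity

theorem invSqrtCoeff_antitone : Antitone invSqrtCoeff := by
  refine antitone_nat_of_succ_le fun j => ?_
  rw [invSqrtCoeff, div_le_iff₀ (by positivity)]
  nlinarith [invSqrtCoeff_pos j]

noncomputable def invSqrtSeries : ℝ⟦X⟧ :=
  mk invSqrtCoeff

theorem one_sub_X_mul_invSqrtSeries_sq : (1 - X) * invSqrtSeries ^ 2 = 1 := by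
  have hode : C (2 : ℝ) * ((1 - X) * d⁄dX ℝ invSqrtSeries) = invSqrtSeries := by
    ext n
    rw [coeff_C_mul, sub_mul, one_mul, map_sub]
    rcases n with _ | n
    · simp [invSqrtSeries, coeff_derivative, invSqrtCoeff]
    · rw [coeff_succ_X_mul]
      simp only [coeff_derivative, invSqrtSeries, coeff_mk, invSqrtCoeff]
      push_cast
      field_simp
      ring
  rw [map_ofNat] at hode
  refine derivative.ext ?_ (by simp [invSqrtSeries, constantCoeff_mk, invSqrtCoeff])
  rw [Derivation.leibniz, Derivation.leibniz_pow, derivative_one, map_sub, derivative_X,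
    derivative_one]
  simp only [smul_eq_mul, nsmul_eq_mul]
  linear_combination invSqrtSeries * hode

theorem coeff_invSqrtSeries_sq (l : ℕ) : coeff l (invSqrtSeries ^ 2) = 1 := by
  have h := fun n => congrArg (coeff n) one_sub_X_mul_invSqrtSeries_sq
  induction l with
  | zero => simpa [sub_mul, coeff_zero_eq_constantCoeff_apply] using h 0
  | succ l ih => simpa [sub_mul, ih, sub_eq_zero] using h (l + 1)

noncomputable def invSqrtPoly (N : ℕ) : Polynomial ℝ :=
  trunc (N + 1) invSqrtSeries

theorem coeff_invSqrtPoly (N j : ℕ) :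
    (invSqrtPoly N).coeff j = if j ≤ N then invSqrtCoeff j else 0 := by
  simp [invSqrtPoly, coeff_trunc, invSqrtSeries]

theorem coeff_invSqrtPoly_nonneg (N j : ℕ) : 0 ≤ (invSqrtPoly N).coeff j := by
  rw [coeff_invSqrtPoly]
  split_ifs
  exacts [(invSqrtCoeff_pos j).le, le_rfl]

theorem antitone_coeff_invSqrtPoly (N : ℕ) : Antitone (invSqrtPoly N).coeff := by
  intro i j hij
  simp only [coeff_invSqrtPoly]
  split_ifs with hj hi hi
  · exact invSqrtCoeff_antitone hij
  · omega
  · exact (invSqrtCoeff_pos i).le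
  · exact le_rfl

theorem coeff_invSqrtPoly_sq_of_le {N l : ℕ} (hl : l ≤ N) : (invSqrtPoly N ^ 2).coeff l = 1 := by
  rw [← coeff_invSqrtSeries_sq l, sq, sq, coeff_mul_eq_coeff_trunc_mul_trunc₂ _ _
    (Nat.lt_succ_of_le hl) (Nat.lt_succ_of_le hl), ← Polynomial.coe_mul, Polynomial.coeff_coe,
    invSqrtPoly]

end InvSqrtSeries

theorem Polynomial.coeff_mul_succ_le {R : Type*} [Semiring R] [PartialOrder R] [IsOrderedRing R]
    {p q : Polynomial R} (hp : Antitone p.coeff) (hq : ∀ j, 0 ≤ q.coeff j) {l : ℕ}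
    (hql : q.coeff (l + 1) = 0) : (p * q).coeff (l + 1) ≤ (p * q).coeff l := by
  rw [coeff_mul, coeff_mul, Finset.Nat.sum_antidiagonal_succ, hql, mul_zero, zero_add]
  exact Finset.sum_le_sum fun x _ => mul_le_mul_of_nonneg_right (hp (Nat.le_succ _)) (hq _)

open Polynomial

theorem coeff_invSqrtPoly_sq_succ_le (N l : ℕ) :
    (invSqrtPoly N ^ 2).coeff (l + 1) ≤ (invSqrtPoly N ^ 2).coeff l := by
  rcases le_or_gt (l + 1) N with hl | hl
  · rw [coeff_invSqrtPoly_sq_of_le hl, coeff_invSqrtPoly_sq_of_le (by omega)]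
  · rw [sq]
    refine coeff_mul_succ_le (antitone_coeff_invSqrtPoly N) (coeff_invSqrtPoly_nonneg N) ?_
    simp [coeff_invSqrtPoly, hl.not_ge]

theorem coeff_invSqrtPoly_sq_nonneg (N l : ℕ) : 0 ≤ (invSqrtPoly N ^ 2).coeff l := by
  rw [sq, coeff_mul]
  exact Finset.sum_nonneg fun x _ =>
    mul_nonneg (coeff_invSqrtPoly_nonneg N _) (coeff_invSqrtPoly_nonneg N _)

noncomputable def defectPoly (N : ℕ) : Polynomial ℝ :=
  1 - (1 - X) * invSqrtPoly N ^ 2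

theorem coeff_defectPoly_nonneg (N l : ℕ) : 0 ≤ (defectPoly N).coeff l := by
  rcases l with _ | l
  · simp [defectPoly, sub_mul, coeff_invSqrtPoly_sq_of_le (Nat.zero_le N)]
  · simp only [defectPoly, sub_mul, one_mul, coeff_sub, coeff_X_mul, coeff_one,
      Nat.succ_ne_zero, if_false]
    linarith [coeff_invSqrtPoly_sq_succ_le N l]

theorem eval_defectPoly_le (N : ℕ) {z : ℝ} (hz₀ : 0 ≤ z) (hz₁ : z ≤ 1) :
    (defectPoly N).eval z ≤ z ^ (N + 1) := by
  have hdeg : (invSqrtPoly N ^ 2).natDegree < 2 * N + 1 := by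
    have := PowerSeries.natDegree_trunc_lt invSqrtSeries N
    have := natDegree_pow_le (p := invSqrtPoly N) (n := 2)
    rw [invSqrtPoly] at *
    omega
  have hgeom : ∑ i ∈ Finset.range (N + 1), z ^ i ≤ (invSqrtPoly N ^ 2).eval z := by
    rw [eval_eq_sum_range' hdeg]
    calc ∑ i ∈ Finset.range (N + 1), z ^ i
        = ∑ i ∈ Finset.range (N + 1), (invSqrtPoly N ^ 2).coeff i * z ^ i :=
          Finset.sum_congr rfl fun i hi => by
            rw [coeff_invSqrtPoly_sq_of_le (Nat.lt_succ_iff.1 (Finset.mem_range.1 hi)), one_mul]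
      _ ≤ _ := Finset.sum_le_sum_of_subset_of_nonneg (Finset.range_mono (by omega))
          fun i _ _ => mul_nonneg (coeff_invSqrtPoly_sq_nonneg N i) (pow_nonneg hz₀ i)
  have := mul_le_mul_of_nonneg_left hgeom (sub_nonneg.2 hz₁)
  rw [mul_neg_geom_sum] at this
  simp only [defectPoly, eval_sub, eval_one, eval_mul, eval_X, eval_pow] at this ⊢
  linarith

theorem coeff_invSqrtPoly_sub_one_nonneg (N l : ℕ) : 0 ≤ (invSqrtPoly N - 1).coeff l := by
  rcases l with _ | l
  · simp [coeff_invSqrtPoly, invSqrtCoeff]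
  · simpa [coeff_one] using coeff_invSqrtPoly_nonneg N (l + 1)

end InvSqrtPoly

section Putinar

variable {A : Type*} [CommRing A] [Algebra ℝ A]

namespace IsQuadraticModule

variable {M : Set A}

open Polynomial

theorem aeval_mem (hM : IsQuadraticModule M) {v : A} (hv : v ∈ M) {q : ℝ[X]}
    (hq : ∀ i, 0 ≤ q.coeff i) : aeval v q ∈ M := by
  rw [aeval_eq_sum_range]
  exact hM.sum_mem fun i _ => by
    rw [Algebra.smul_def]
    exact hM.algebraMap_mul_mem (hq i) (hM.pow_mem hv i)

theorem algebraMap_eval_sub_aeval_mem (hM : IsQuadraticModule M) {v : A} {b : ℝ} (hb : 0 < b)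
    (hv : v ∈ M) (hbv : (b : A) - v ∈ M) {q : ℝ[X]} (hq : ∀ i, 0 ≤ q.coeff i) :
    ((q.eval b : ℝ) : A) - aeval v q ∈ M := by
  -- `(b - v)² v + v² (b - v) = b · v (b - v)`
  have hprod : v * ((b : A) - v) ∈ M := by
    convert hM.algebraMap_mul_mem (inv_nonneg.2 hb.le)
      (hM.add_mem (hM.mul_self_mul_mem ((b : A) - v) hv) (hM.mul_self_mul_mem v hbv)) using 1
    linear_combination (-(v * ((b : A) - v))) * algebraMap_inv_mul_cancel (A := A) hb.ne'
  have hpow (l : ℕ) : ((b ^ l : ℝ) : A) - v ^ l ∈ M := by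
    induction l with
    | zero => simpa using hM.zero_mem
    | succ l ih =>
      convert hM.add_mem (hM.algebraMap_mul_mem hb.le ih) (hM.pow_mul_mem hprod hbv l) using 1
      push_cast
      ring
  rw [aeval_eq_sum_range, eval_eq_sum_range, algebraMap.coe_sum, ← Finset.sum_sub_distrib]
  refine hM.sum_mem fun i _ => ?_
  convert hM.algebraMap_mul_mem (hq i) (hpow i) using 1
  rw [Algebra.smul_def, algebraMap.coe_mul]
  ring

theorem exists_pos_sub_mem_add_mem (hM : IsQuadraticModule M) (harch : IsArchimedeanQM M)
    (a : A) : ∃ r : ℝ, 0 < r ∧ (r : A) - a ∈ M ∧ (r : A) + a ∈ M := by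
  obtain ⟨r₁, h₁⟩ := harch a
  obtain ⟨r₂, h₂⟩ := harch (-a)
  rw [sub_neg_eq_add] at h₂
  refine hM.exists_pos_of_bounded (r := max r₁ r₂) (hM.sub_mem_of_le h₁ (le_max_left _ _)) ?_
  simpa using hM.sub_mem_of_le (a := -a) (by simpa using h₂) (le_max_right r₁ r₂)

/-- The core of Putinar's argument: for `δ ≤ s ≤ 1`, `G = q(1 - s)` with `q` a truncation of the
series of `(1 - z)^(-1/2)` makes `D = 1 - s G²` lie in `M` and be uniformly small, so that
`p = G² (s p) + D p` exhibits `p ∈ M`. -/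
theorem mem_of_mul_eq_algebraMap_add (hM : IsQuadraticModule M) (harch : IsArchimedeanQM M)
    {s p t : A} {δ c : ℝ} (hδ₀ : 0 < δ) (hδ₁ : δ < 1) (hc : 0 < c) (h1s : 1 - s ∈ M)
    (hsδ : s - (δ : A) ∈ M) (ht : t ∈ M) (he : s * p = (c : A) + t) : p ∈ M := by
  obtain ⟨N, hN, hNp₁, hNp₂⟩ := hM.exists_pos_sub_mem_add_mem harch p
  set ρ := c / (2 * N)
  have hρ : 0 < ρ := by positivity
  have hρN : ρ * N ≤ c := by
    have : ρ * N = c / 2 := by simp only [ρ]; field_simp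
    linarith
  obtain ⟨K, hK⟩ := exists_pow_lt_of_lt_one hρ (sub_lt_self 1 hδ₀)
  have hbv : ((1 - δ : ℝ) : A) - (1 - s) ∈ M := by
    convert hsδ using 1
    push_cast
    ring
  set G := aeval (1 - s) (invSqrtPoly K)
  set D := aeval (1 - s) (defectPoly K)
  have hD_eq : D = 1 - s * G ^ 2 := by simp [D, G, defectPoly]
  have hD : D ∈ M := hM.aeval_mem h1s (coeff_defectPoly_nonneg K)
  have hDρ : (ρ : A) - D ∈ M := by
    refine hM.sub_mem_of_le (hM.algebraMap_eval_sub_aeval_mem (by linarith) h1s hbv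
      (coeff_defectPoly_nonneg K)) ?_
    calc (defectPoly K).eval (1 - δ) ≤ (1 - δ) ^ (K + 1) :=
          eval_defectPoly_le K (by linarith) (by linarith)
      _ ≤ (1 - δ) ^ K := pow_le_pow_of_le_one (by linarith) (by linarith) K.le_succ
      _ ≤ ρ := hK.le
  have hDp := hM.mul_add_mul_mem hρ hN hDρ (hM.add_mem (hM.algebraMap_mem hρ.le) hD) hNp₁ hNp₂
  have hG : G - 1 ∈ M := by
    simpa [G] using hM.aeval_mem h1s (coeff_invSqrtPoly_sub_one_nonneg K)
  have hcG : (c : A) * ((G - 1) * (G - 1) + (G - 1) + (G - 1)) ∈ M :=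
    hM.algebraMap_mul_mem hc.le (hM.add_mem (hM.add_mem (hM.mul_self_mem _) hG) hG)
  convert hM.add_mem (hM.add_mem (hM.add_mem hcG (hM.mul_self_mul_mem G ht)) hDp)
    (hM.algebraMap_mem (sub_nonneg.2 hρN)) using 1
  push_cast
  linear_combination G ^ 2 * he - p * hD_eq

theorem mem_of_isSumSq_mul_eq_one_add (hM : IsQuadraticModule M) (harch : IsArchimedeanQM M)
    {σ p t : A} (hσ : IsSumSq σ) (ht : t ∈ M) (he : σ * p = 1 + t) : p ∈ M := by
  obtain ⟨N, hN, -, hNp⟩ := hM.exists_pos_sub_mem_add_mem harch p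
  set μ := (2 * N)⁻¹
  have hμ : 0 < μ := by positivity
  have hμN : ((μ : ℝ) : A) * N = 1 - ((2⁻¹ : ℝ) : A) := by
    have : μ * N = 1 - 2⁻¹ := by
      simp only [μ]
      field_simp
      norm_num
    rw [← algebraMap.coe_mul, this]
    push_cast
    ring
  obtain ⟨k, hk⟩ := harch (σ + μ)
  set K := max k (2 * μ)
  have hK : 0 < K := lt_of_lt_of_le (by positivity) (le_max_right k _)
  have hKinv := algebraMap_inv_mul_cancel (A := A) hK.ne'
  -- rescale `σ + μ` into `[δ, 1]`, where `σ + μ ≥ μ` and `(σ + μ) p = 1/2 + (t + μ (N + p))`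
  refine hM.mem_of_mul_eq_algebraMap_add harch (s := (K⁻¹ : ℝ) * (σ + μ)) (δ := K⁻¹ * μ)
    (c := K⁻¹ * 2⁻¹) (t := (K⁻¹ : ℝ) * (t + μ * (N + p))) (by positivity) ?_ (by positivity)
    ?_ ?_ (hM.algebraMap_mul_mem (by positivity) (hM.add_mem ht (hM.algebraMap_mul_mem hμ.le hNp)))
    ?_
  · rw [inv_mul_lt_iff₀ hK, mul_one]
    linarith [le_max_right k (2 * μ)]
  · convert hM.algebraMap_mul_mem (inv_nonneg.2 hK.le) (hM.sub_mem_of_le hk (le_max_left k (2 * μ)))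
      using 1
    linear_combination (-1 : A) * hKinv
  · convert hM.algebraMap_mul_mem (inv_nonneg.2 hK.le) (hM.isSumSq_mem hσ) using 1
    push_cast
    ring
  · push_cast
    linear_combination (K⁻¹ : ℝ) * he - ((K⁻¹ : ℝ) : A) * hμN

theorem mem_of_forall_algHom_pos (hM : IsQuadraticModule M) (harch : IsArchimedeanQM M) {p : A}
    (hp : ∀ φ : A →ₐ[ℝ] ℝ, (∀ a ∈ M, 0 ≤ φ a) → 0 < φ p) : p ∈ M := by
  by_cases h : -1 ∈ qmAdjoin M (-p)
  · obtain ⟨t, ht, s, hs, he⟩ := h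
    exact hM.mem_of_isSumSq_mul_eq_one_add harch hs ht (by linear_combination he)
  · obtain ⟨φ, hφ⟩ := IsProperQM.exists_algHom_nonneg ⟨isQuadraticModule_qmAdjoin hM (-p), h⟩
      (harch.mono (subset_qmAdjoin M _))
    have h₁ := hφ (-p) (hM.mem_qmAdjoin_self (-p))
    have h₂ := hp φ fun a ha => hφ a (subset_qmAdjoin M _ ha)
    rw [map_neg] at h₁
    linarith

end IsQuadraticModule

open MvPolynomial in
theorem mem_qmodule_of_eval_pos {σ ι : Type*} [Fintype σ] [Fintype ι]
    (G : ι → MvPolynomial σ ℝ) {R : ℝ} (hball : C R - ∑ i, X i ^ 2 ∈ qmodule G)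
    {p : MvPolynomial σ ℝ} (hp : ∀ x, (∀ i, 0 ≤ eval x (G i)) → 0 < eval x p) :
    p ∈ qmodule G := by
  have hM := isQuadraticModule_qmodule G
  refine hM.mem_of_forall_algHom_pos (hM.isArchimedeanQM_of_ball_mem hball) fun φ hφ => ?_
  have hφ_eval (q : MvPolynomial σ ℝ) : φ q = eval (φ ∘ X) q := by
    rw [← coe_aeval_eq_eval, ← aeval_unique]
    rfl
  rw [hφ_eval]
  exact hp _ fun i => hφ_eval (G i) ▸ hφ _ (generator_mem_qmodule G i)

end Putinar

open MvPolynomial MeasureTheory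

theorem MvPolynomial.eval_aeval {σ τ : Type*} (F : σ → MvPolynomial τ ℝ)
    (v : MvPolynomial σ ℝ) (y : τ → ℝ) : eval y (aeval F v) = eval (fun i => eval y (F i)) v := by
  induction v using MvPolynomial.induction_on <;> simp_all

theorem MvPolynomial.exists_eval_near {σ : Type*} {K : Set (σ → ℝ)} (hK : IsCompact K)
    {f : (σ → ℝ) → ℝ} (hf : Continuous f) {ε : ℝ} (hε : 0 < ε) :
    ∃ V : MvPolynomial σ ℝ, ∀ x ∈ K, |eval x V - f x| < ε := by
  let coord : σ → C(σ → ℝ, ℝ) := fun i => ⟨fun x => x i, continuous_apply i⟩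
  have hcoord (V : MvPolynomial σ ℝ) (x : σ → ℝ) : aeval coord V x = eval x V := by
    induction V using MvPolynomial.induction_on <;> simp_all [coord]
  have hsep : (aeval (R := ℝ) coord).range.SeparatesPoints := by
    intro x y hxy
    obtain ⟨i, hi⟩ := Function.ne_iff.1 hxy
    exact ⟨coord i, ⟨coord i, ⟨X i, aeval_X coord i⟩, rfl⟩, hi⟩
  obtain ⟨_, ⟨V, rfl⟩, hV⟩ :=
    ContinuousMap.exists_mem_subalgebra_near_continuous_of_isCompact_of_separatesPoints hsep
      ⟨f, hf⟩ hK hε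
  exact ⟨V, fun x hx => by simpa [hcoord] using hV x hx⟩

section SemialgebraicSets

variable {n nX : ℕ} {g : Fin nX → MvPolynomial (Fin n) ℝ}

theorem isClosed_semiSet (g : Fin nX → MvPolynomial (Fin n) ℝ) : IsClosed (semiSet g) := by
  simp only [semiSet, Set.ofPred_forall]
  exact isClosed_iInter fun i => isClosed_le continuous_const (continuous_eval _)

theorem semiSet_subset_closedBall {R : ℝ}
    (hball : ∃ i, g i = C (R ^ 2) - ∑ j : Fin n, X j ^ 2) :
    semiSet g ⊆ Metric.closedBall 0 |R| := by
  obtain ⟨i, hi⟩ := hball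
  intro x hx
  have hsum : ∑ j, x j ^ 2 ≤ R ^ 2 := by simpa [hi] using hx i
  rw [Metric.mem_closedBall, dist_zero_right, pi_norm_le_iff_of_nonneg (abs_nonneg R)]
  intro j
  rw [Real.norm_eq_abs, ← sq_le_sq]
  exact (Finset.single_le_sum (fun j _ => sq_nonneg (x j)) (Finset.mem_univ j)).trans hsum

theorem isCompact_semiSet {R : ℝ} (hball : ∃ i, g i = C (R ^ 2) - ∑ j : Fin n, X j ^ 2) :
    IsCompact (semiSet g) :=
  (isCompact_closedBall 0 |R|).of_isClosed_subset (isClosed_semiSet g)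
    (semiSet_subset_closedBall hball)

end SemialgebraicSets

theorem eval_nonneg_of_mem_qmodule {σ ι : Type*} [Fintype ι] {G : ι → MvPolynomial σ ℝ}
    {p : MvPolynomial σ ℝ} (hp : p ∈ qmodule G) {x : σ → ℝ} (hx : ∀ i, 0 ≤ eval x (G i)) :
    0 ≤ eval x p := by
  obtain ⟨s₀, s, hs₀, hs, rfl⟩ := hp
  simp only [map_add, map_sum, map_mul]
  exact add_nonneg ((hs₀.map (eval x)).nonneg)
    (Finset.sum_nonneg fun i _ => mul_nonneg ((hs i).map (eval x)).nonneg (hx i))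

section ProductConstraints

variable {n m nX nU : ℕ}

noncomputable def prodConstraints (g : Fin nX → MvPolynomial (Fin n) ℝ)
    (h : Fin nU → MvPolynomial (Fin m) ℝ) : Fin nX ⊕ Fin nU → MvPolynomial (Fin n ⊕ Fin m) ℝ :=
  Sum.elim (fun i => rename Sum.inl (g i)) (fun j => rename Sum.inr (h j))

theorem forall_eval_prodConstraints_nonneg {g : Fin nX → MvPolynomial (Fin n) ℝ}
    {h : Fin nU → MvPolynomial (Fin m) ℝ} {y : Fin n ⊕ Fin m → ℝ} :
    (∀ l, 0 ≤ eval y (prodConstraints g h l)) ↔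
      y ∘ Sum.inl ∈ semiSet g ∧ y ∘ Sum.inr ∈ semiSet h := by
  simp [prodConstraints, semiSet, eval_rename, Sum.forall]

theorem ball_mem_qmodule_prodConstraints {g : Fin nX → MvPolynomial (Fin n) ℝ}
    {h : Fin nU → MvPolynomial (Fin m) ℝ} {RX RU : ℝ}
    (hgball : ∃ i, g i = C (RX ^ 2) - ∑ j : Fin n, X j ^ 2)
    (hhball : ∃ j, h j = C (RU ^ 2) - ∑ i : Fin m, X i ^ 2) :
    C (RX ^ 2 + RU ^ 2) - ∑ l, X l ^ 2 ∈ qmodule (prodConstraints g h) := by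
  obtain ⟨i, hi⟩ := hgball
  obtain ⟨j, hj⟩ := hhball
  convert (isQuadraticModule_qmodule _).add_mem (generator_mem_qmodule _ (Sum.inl i))
    (generator_mem_qmodule (prodConstraints g h) (Sum.inr j)) using 1
  simp only [prodConstraints, Sum.elim_inl, Sum.elim_inr, hi, hj, map_sub, map_sum, map_pow,
    rename_C, rename_X, map_add, Fintype.sum_sum_type]
  ring

end ProductConstraints

section DualSOSHierarchy

open Filter Topology

variable {n m nX nU : ℕ} {g : Fin nX → MvPolynomial (Fin n) ℝ}
  {h : Fin nU → MvPolynomial (Fin m) ℝ} {F : Fin n → MvPolynomial (Fin n ⊕ Fin m) ℝ} {α : ℝ}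

theorem eval_rename_inl_sub_aeval (V : MvPolynomial (Fin n) ℝ) (y : Fin n ⊕ Fin m → ℝ) :
    eval y (rename Sum.inl V - C α * aeval F V)
      = eval (y ∘ Sum.inl) V - α * eval (polyMapEval F (y ∘ Sum.inl) (y ∘ Sum.inr)) V := by
  rw [map_sub, map_mul, eval_C, eval_rename, eval_aeval]
  unfold polyMapEval
  rw [Sum.elim_comp_inl_inr]

namespace KFeasD

variable {k : ℕ} {v w : MvPolynomial (Fin n) ℝ}

theorem mono (hvw : KFeasD g h F α k v w) {k' : ℕ} (hkk' : k ≤ k') : KFeasD g h F α k' v w := by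
  obtain ⟨hv, hw, q₀, q, r, p₀, p, s₀, s, hq₀, hq, hr, hp₀, hp, hs₀, hs, hdq₀, hdq, hdr, hdp₀, hdp,
    hds₀, hds, he₁, he₂, he₃⟩ := hvw
  have h₂ : 2 * k ≤ 2 * k' := by omega
  have hF : 2 * k * max 1 (Finset.univ.sup fun i => (F i).totalDegree)
      ≤ 2 * k' * max 1 (Finset.univ.sup fun i => (F i).totalDegree) :=
    Nat.mul_le_mul_right _ h₂
  exact ⟨hv.trans h₂, hw.trans h₂, q₀, q, r, p₀, p, s₀, s, hq₀, hq, hr, hp₀, hp, hs₀, hs,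
    hdq₀.trans hF, fun i => (hdq i).trans hF, fun j => (hdr j).trans hF, hdp₀.trans h₂,
    fun i => (hdp i).trans h₂, hds₀.trans h₂, fun i => (hds i).trans h₂, he₁, he₂, he₃⟩

theorem mem_qmodule (hvw : KFeasD g h F α k v w) :
    rename Sum.inl v - C α * aeval F v ∈ qmodule (prodConstraints g h) ∧
      w - v - 1 ∈ qmodule g ∧ w ∈ qmodule g := by
  obtain ⟨-, -, q₀, q, r, p₀, p, s₀, s, hq₀, hq, hr, hp₀, hp, hs₀, hs, -, -, -, -, -, -, -,
    he₁, he₂, he₃⟩ := hvw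
  refine ⟨⟨q₀, Sum.elim q r, isSOS_iff_isSumSq.1 hq₀,
      Sum.forall.2 ⟨fun i => isSOS_iff_isSumSq.1 (hq i), fun j => isSOS_iff_isSumSq.1 (hr j)⟩, ?_⟩,
    ⟨p₀, p, isSOS_iff_isSumSq.1 hp₀, fun i => isSOS_iff_isSumSq.1 (hp i), he₂⟩,
    ⟨s₀, s, isSOS_iff_isSumSq.1 hs₀, fun i => isSOS_iff_isSumSq.1 (hs i), he₃⟩⟩
  rw [he₁, Fintype.sum_sum_type, add_assoc]
  simp only [prodConstraints, Sum.elim_inl, Sum.elim_inr]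

theorem dualFeasD (hvw : KFeasD g h F α k v w) :
    DualFeasD g h F α (fun x => eval x v) (fun x => eval x w) := by
  obtain ⟨hdec, hwv, hw⟩ := hvw.mem_qmodule
  refine ⟨continuous_eval v, continuous_eval w, fun x hx u hu => ?_, fun x hx => ?_,
    fun x hx => eval_nonneg_of_mem_qmodule hw hx⟩
  · have := eval_nonneg_of_mem_qmodule hdec
      ((forall_eval_prodConstraints_nonneg (y := Sum.elim x u)).2 ⟨hx, hu⟩)
    rw [eval_rename_inl_sub_aeval] at this
    simp only [Sum.elim_comp_inl, Sum.elim_comp_inr] at this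
    linarith
  · have := eval_nonneg_of_mem_qmodule hwv hx
    simp only [map_sub, map_one] at this
    linarith

end KFeasD

theorem exists_kFeasD_of_mem_qmodule {V W : MvPolynomial (Fin n) ℝ}
    (hdec : rename Sum.inl V - C α * aeval F V ∈ qmodule (prodConstraints g h))
    (hWV : W - V - 1 ∈ qmodule g) (hW : W ∈ qmodule g) : ∃ k, KFeasD g h F α k V W := by
  obtain ⟨q₀, q, hq₀, hq, he₁⟩ := hdec
  obtain ⟨p₀, p, hp₀, hp, he₂⟩ := hWV
  obtain ⟨s₀, s, hs₀, hs, he₃⟩ := hW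
  have hdeg (d : ℕ) : ∀ᶠ k in atTop, d ≤ 2 * k :=
    (eventually_ge_atTop d).mono fun k hk => by omega
  have hdegF (d : ℕ) : ∀ᶠ k in atTop,
      d ≤ 2 * k * max 1 (Finset.univ.sup fun i => (F i).totalDegree) :=
    (hdeg d).mono fun k hk => hk.trans (Nat.le_mul_of_pos_right _ (by positivity))
  obtain ⟨k, hV, hW, hdq₀, hdq, hdr, hdp₀, hdp, hds₀, hds⟩ :=
    ((hdeg V.totalDegree).and <| (hdeg W.totalDegree).and <| (hdegF q₀.totalDegree).and <|
      (eventually_all.2 fun i => hdegF (q (.inl i) * rename Sum.inl (g i)).totalDegree).and <|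
      (eventually_all.2 fun j => hdegF (q (.inr j) * rename Sum.inr (h j)).totalDegree).and <|
      (hdeg p₀.totalDegree).and <| (eventually_all.2 fun i => hdeg (p i * g i).totalDegree).and <|
      (hdeg s₀.totalDegree).and <| eventually_all.2 fun i => hdeg (s i * g i).totalDegree).exists
  refine ⟨k, hV, hW, q₀, q ∘ Sum.inl, q ∘ Sum.inr, p₀, p, s₀, s, isSOS_iff_isSumSq.2 hq₀,
    fun i => isSOS_iff_isSumSq.2 (hq _), fun j => isSOS_iff_isSumSq.2 (hq _),
    isSOS_iff_isSumSq.2 hp₀, fun i => isSOS_iff_isSumSq.2 (hp i), isSOS_iff_isSumSq.2 hs₀,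
    fun i => isSOS_iff_isSumSq.2 (hs i), hdq₀, hdq, hdr, hdp₀, hdp, hds₀, hds, ?_, he₂, he₃⟩
  rw [he₁, Fintype.sum_sum_type, add_assoc]
  simp only [prodConstraints, Sum.elim_inl, Sum.elim_inr, Function.comp_apply]

theorem continuous_polyMapEval (F : Fin n → MvPolynomial (Fin n ⊕ Fin m) ℝ) :
    Continuous fun p : (Fin n → ℝ) × (Fin m → ℝ) => polyMapEval F p.1 p.2 :=
  continuous_pi fun i => (continuous_eval (F i)).comp <| continuous_pi <| Sum.forall.2
    ⟨fun a => (continuous_apply a).comp continuous_fst,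
      fun b => (continuous_apply b).comp continuous_snd⟩

theorem DualFeasD.exists_strict_poly_approx (hα : α < 1) (hX : IsCompact (semiSet g))
    (hU : IsCompact (semiSet h)) {v w : (Fin n → ℝ) → ℝ} (hvw : DualFeasD g h F α v w) {η : ℝ}
    (hη : 0 < η) : ∃ V W : MvPolynomial (Fin n) ℝ,
      (∀ x ∈ semiSet g, ∀ u ∈ semiSet h, α * eval (polyMapEval F x u) V < eval x V) ∧
      (∀ x ∈ semiSet g, eval x V + 1 < eval x W) ∧ (∀ x ∈ semiSet g, 0 < eval x W) ∧
      ∀ x ∈ semiSet g, eval x W ≤ w x + η := by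
  obtain ⟨hvc, hwc, hdec, hwv, hw⟩ := hvw
  set K := semiSet g ∪ (fun p => polyMapEval F p.1 p.2) '' semiSet g ×ˢ semiSet h
  have hK : IsCompact K := hX.union ((hX.prod hU).image (continuous_polyMapEval F))
  -- approximate `v + c` and `w + 2c` within `δ` on `K`; the margin `(1 - α) c` absorbs the errors
  set c := η / 3
  set δ := (1 - α) * c / (4 * (1 + |α|))
  have hc : 0 < c := by positivity
  have h1α : 0 < 1 + |α| := by positivity
  have hδ : 0 < δ := div_pos (mul_pos (by linarith) hc) (by positivity)
  have hδα : (1 + |α|) * δ < (1 - α) * c := by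
    rw [mul_div_assoc', div_lt_iff₀ (by positivity)]
    nlinarith [mul_pos (mul_pos (sub_pos.2 hα) hc) h1α]
  have hδc : δ ≤ c / 4 := by
    rw [div_le_div_iff₀ (by positivity) (by norm_num)]
    nlinarith [neg_abs_le α, abs_nonneg α]
  obtain ⟨V, hV⟩ := exists_eval_near hK (f := fun x => v x + c) (by fun_prop) hδ
  obtain ⟨W, hW⟩ := exists_eval_near hK (f := fun x => w x + 2 * c) (by fun_prop) hδ
  have hVX (x) (hx : x ∈ semiSet g) := abs_lt.1 (hV x (.inl hx))
  have hWX (x) (hx : x ∈ semiSet g) := abs_lt.1 (hW x (.inl hx))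
  refine ⟨V, W, fun x hx u hu => ?_, fun x hx => ?_, fun x hx => ?_, fun x hx => ?_⟩
  · have hf : |eval (polyMapEval F x u) V - (v (polyMapEval F x u) + c)| < δ :=
      hV _ (.inr ⟨(x, u), ⟨hx, hu⟩, rfl⟩)
    have hαf : α * eval (polyMapEval F x u) V - α * (v (polyMapEval F x u) + c) ≤ |α| * δ := by
      rw [← mul_sub]
      exact (le_abs_self _).trans (abs_mul α _ ▸ mul_le_mul_of_nonneg_left hf.le (abs_nonneg α))
    linarith [hVX x hx, hdec x hx u hu]
  · linarith [hVX x hx, hWX x hx, hwv x hx]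
  · linarith [hWX x hx, hw x hx]
  · have hcη : 3 * c = η := by simp only [c]; ring
    linarith [hWX x hx]

theorem DualFeasD.exists_kFeasD_near (hα : α < 1) {RX RU : ℝ}
    (hgball : ∃ i, g i = C (RX ^ 2) - ∑ j : Fin n, X j ^ 2)
    (hhball : ∃ j, h j = C (RU ^ 2) - ∑ i : Fin m, X i ^ 2) {v w : (Fin n → ℝ) → ℝ}
    (hvw : DualFeasD g h F α v w) {η : ℝ} (hη : 0 < η) :
    ∃ k V W, KFeasD g h F α k V W ∧ ∀ x ∈ semiSet g, eval x W ≤ w x + η := by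
  obtain ⟨V, W, hdec, hWV, hW, hWw⟩ := hvw.exists_strict_poly_approx hα (isCompact_semiSet hgball)
    (isCompact_semiSet hhball) hη
  have hballg : C (RX ^ 2) - ∑ j : Fin n, X j ^ 2 ∈ qmodule g := by
    obtain ⟨i, hi⟩ := hgball
    exact hi ▸ generator_mem_qmodule g i
  obtain ⟨k, hk⟩ := exists_kFeasD_of_mem_qmodule
    (mem_qmodule_of_eval_pos (p := rename Sum.inl V - C α * aeval F V) _
      (ball_mem_qmodule_prodConstraints hgball hhball) fun y hy => by
      obtain ⟨hx, hu⟩ := forall_eval_prodConstraints_nonneg.1 hy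
      rw [eval_rename_inl_sub_aeval]
      linarith [hdec _ hx _ hu])
    (mem_qmodule_of_eval_pos (p := W - V - 1) g hballg fun x hx => by
      simp only [map_sub, map_one]
      linarith [hWV x hx])
    (mem_qmodule_of_eval_pos g hballg hW)
  exact ⟨k, V, W, hk, hWw⟩

theorem DualFeasD.integral_nonneg {v w : (Fin n → ℝ) → ℝ} (hvw : DualFeasD g h F α v w) :
    0 ≤ ∫ x in semiSet g, w x :=
  setIntegral_nonneg (isClosed_semiSet g).measurableSet hvw.2.2.2.2

theorem kFeasD_zero_one (k : ℕ) : KFeasD g h F α k 0 1 := by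
  have h₀ {σ : Type} : IsSOS (0 : MvPolynomial σ ℝ) := isSOS_iff_isSumSq.2 .zero
  refine ⟨by simp, by simp, 0, 0, 0, 0, 0, 1, 0, h₀, fun _ => h₀, fun _ => h₀, h₀, fun _ => h₀,
    isSOS_iff_isSumSq.2 .one, fun _ => h₀, ?_⟩
  simp

theorem bddBelow_sosValD_set (k : ℕ) : BddBelow {r : ℝ | ∃ v w, KFeasD g h F α k v w ∧
    r = ∫ x in semiSet g, eval x w} :=
  ⟨0, by rintro _ ⟨v, w, hk, rfl⟩; exact hk.dualFeasD.integral_nonneg⟩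

theorem sosValD_le {k : ℕ} {v w : MvPolynomial (Fin n) ℝ} (hk : KFeasD g h F α k v w) :
    sosValD g h F α k ≤ ∫ x in semiSet g, eval x w :=
  csInf_le (bddBelow_sosValD_set k) ⟨v, w, hk, rfl⟩

theorem sosValD_succ_le (k : ℕ) : sosValD g h F α (k + 1) ≤ sosValD g h F α k :=
  csInf_le_csInf (bddBelow_sosValD_set (k + 1)) ⟨_, 0, 1, kFeasD_zero_one k, rfl⟩
    fun _ ⟨v, w, hk, hr⟩ => ⟨v, w, hk.mono k.le_succ, hr⟩

theorem dualValD_le_sosValD (k : ℕ) : dualValD g h F α ≤ sosValD g h F α k :=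
  le_csInf ⟨_, 0, 1, kFeasD_zero_one k, rfl⟩ fun _ ⟨v, w, hk, hr⟩ =>
    hr ▸ csInf_le ⟨0, by rintro _ ⟨v, w, hvw, rfl⟩; exact hvw.integral_nonneg⟩
      ⟨_, _, hk.dualFeasD, rfl⟩

theorem exists_sosValD_le (hα : α < 1) {RX RU : ℝ}
    (hgball : ∃ i, g i = C (RX ^ 2) - ∑ j : Fin n, X j ^ 2)
    (hhball : ∃ j, h j = C (RU ^ 2) - ∑ i : Fin m, X i ^ 2) {ε : ℝ} (hε : 0 < ε) :
    ∃ k, sosValD g h F α k ≤ dualValD g h F α + ε := by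
  have hne : {r : ℝ | ∃ v w, DualFeasD g h F α v w ∧ r = ∫ x in semiSet g, w x}.Nonempty :=
    ⟨_, 0, 1, ⟨continuous_const, continuous_const, by simp, by simp, by simp⟩, rfl⟩
  obtain ⟨_, ⟨v, w, hvw, rfl⟩, hlt⟩ :=
    exists_lt_of_csInf_lt hne (lt_add_of_pos_right (dualValD g h F α) (half_pos hε))
  have hX := isCompact_semiSet hgball
  set vol := volume.real (semiSet g)
  have hη : 0 < ε / (2 * (vol + 1)) := by positivity
  obtain ⟨k, V, W, hk, hW⟩ := hvw.exists_kFeasD_near hα hgball hhball hη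
  have hint {f : (Fin n → ℝ) → ℝ} (hf : Continuous f) : IntegrableOn f (semiSet g) :=
    hf.continuousOn.integrableOn_compact hX
  have hvol : ε / (2 * (vol + 1)) * vol ≤ ε / 2 := by
    rw [div_mul_eq_mul_div, div_le_div_iff₀ (by positivity) two_pos]
    nlinarith [measureReal_nonneg (μ := volume) (s := semiSet g)]
  refine ⟨k, (sosValD_le hk).trans ?_⟩
  calc ∫ x in semiSet g, eval x W
      ≤ ∫ x in semiSet g, (w x + ε / (2 * (vol + 1))) :=
        setIntegral_mono_on (hint (continuous_eval W)) (hint (hvw.2.1.add continuous_const))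
          (isClosed_semiSet g).measurableSet hW
    _ = (∫ x in semiSet g, w x) + ε / (2 * (vol + 1)) * vol := by
        rw [integral_add (hint hvw.2.1) (hint continuous_const), setIntegral_const, smul_eq_mul,
          mul_comm]
    _ ≤ dualValD g h F α + ε := by linarith

theorem tendsto_atTop_of_antitone_of_forall_exists_le {u : ℕ → ℝ} {L : ℝ} (hu : Antitone u)
    (hL : ∀ k, L ≤ u k) (h : ∀ ε > 0, ∃ k, u k ≤ L + ε) : Tendsto u atTop (𝓝 L) := by
  refine Metric.tendsto_atTop.2 fun ε hε => ?_
  obtain ⟨k, hk⟩ := h (ε / 2) (half_pos hε)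
  refine ⟨k, fun j hj => abs_lt.2 ⟨?_, ?_⟩⟩ <;> linarith [hu hj, hL j]

end DualSOSHierarchy

theorem sos_hierarchy_converges_discrete_general {n m nX nU : ℕ}
    (g : Fin nX → MvPolynomial (Fin n) ℝ) (h : Fin nU → MvPolynomial (Fin m) ℝ)
    (F : Fin n → MvPolynomial (Fin n ⊕ Fin m) ℝ)
    (α : ℝ) (hα1 : α < 1)
    (RX RU : ℝ)
    -- Assumption 1: one of the gᵢ (resp. hⱼ) is the ball constraint R² − ‖·‖²
    (hgball : ∃ i, g i = MvPolynomial.C (RX ^ 2) - ∑ j : Fin n, (MvPolynomial.X j) ^ 2)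
    (hhball : ∃ j, h j = MvPolynomial.C (RU ^ 2) - ∑ i : Fin m, (MvPolynomial.X i) ^ 2) :
    (∀ k, sosValD g h F α (k + 1) ≤ sosValD g h F α k) ∧
    (∀ k, dualValD g h F α ≤ sosValD g h F α k) ∧
    Filter.Tendsto (fun k => sosValD g h F α k) Filter.atTop (nhds (dualValD g h F α)) :=
  ⟨sosValD_succ_le, dualValD_le_sosValD,
    tendsto_atTop_of_antitone_of_forall_exists_le (antitone_nat_of_succ_le sosValD_succ_le)
      dualValD_le_sosValD fun _ hε => exists_sosValD_le hα1 hgball hhball hε⟩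

/-- The discrete-time dual SOS values converge monotonically from above to the
optimal value of the discrete-time dual LP. -/
theorem sos_hierarchy_converges_discrete {n m nX nU : ℕ}
    (g : Fin nX → MvPolynomial (Fin n) ℝ) (h : Fin nU → MvPolynomial (Fin m) ℝ)
    (F : Fin n → MvPolynomial (Fin n ⊕ Fin m) ℝ)
    (α : ℝ) (hα0 : 0 < α) (hα1 : α < 1)
    (RX RU : ℝ) (hRX : 0 < RX) (hRU : 0 < RU)
    -- Assumption 1: one of the gᵢ (resp. hⱼ) is the ball constraint R² − ‖·‖²
    (hgball : ∃ i, g i = MvPolynomial.C (RX ^ 2) - ∑ j : Fin n, (MvPolynomial.X j) ^ 2)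
    (hhball : ∃ j, h j = MvPolynomial.C (RU ^ 2) - ∑ i : Fin m, (MvPolynomial.X i) ^ 2) :
    (∀ k, sosValD g h F α (k + 1) ≤ sosValD g h F α k) ∧
    (∀ k, dualValD g h F α ≤ sosValD g h F α k) ∧
    Filter.Tendsto (fun k => sosValD g h F α k) Filter.atTop (nhds (dualValD g h F α)) :=
  sos_hierarchy_converges_discrete_general g h F α hα1 RX RU hgball hhball
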